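/- Let U ⊆ V(D_n). Suppose there are c distinct power cliques Q_1, …, Q_c of D_n, each corresponding to a power of 2 greater than 1, and each intersecting both U and its complement. Then μ_{D_n}(U) ≥ c. -/

import Mathlib

/-- `q v` is the largest power of 2 dividing the positive integer `v`. -/
def q (v : ℕ) : ℕ := 2 ^ (padicValNat 2 v)
/-- Adjacency of the graph `D_n` on positive integers: consecutive, or equal power of 2. -/
def Dadj (i j : ℕ) : Prop := i ≠ j ∧ (i + 1 = j ∨ j + 1 = i ∨ q i = q j)

/-- Vertex set of `D_n`: the integers `1, …, n`. -/
abbrev Vtx (n : ℕ) : Type := {v : ℕ // 1 ≤ v ∧ v ≤ n}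

/-- The graph `D_n`. -/
def D (n : ℕ) : SimpleGraph (Vtx n) where
  Adj i j := Dadj i.1 j.1
  symm := by
    refine ⟨?_⟩
    rintro a b ⟨h1, h2⟩
    refine ⟨h1.symm, ?_⟩
    rcases h2 with h | h | h
    · exact Or.inr (Or.inl h)
    · exact Or.inl h
    · exact Or.inr (Or.inr h.symm)
  loopless := ⟨by rintro a ⟨h1, -⟩; exact h1 rfl⟩
/-- `μ_G(U)`: the number of classes of vertices of `U` having equal
neighbourhoods in the complement of `U`. -/
noncomputable def simClasses {V : Type*} (G : SimpleGraph V) (U : Set V) : ℕ :=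
  ((fun x => {y | y ∉ U ∧ G.Adj x y}) '' U).ncard

theorem stmt11 (n c : ℕ) (U : Set (Vtx n)) (K : Fin c → ℕ)
    (hinj : Function.Injective K) (hgt : ∀ i, 1 ≤ K i)
    (hU : ∀ i, ∃ u : Vtx n, u ∈ U ∧ q u.1 = 2 ^ K i)
    (hUc : ∀ i, ∃ w : Vtx n, w ∉ U ∧ q w.1 = 2 ^ K i) :
    c ≤ simClasses (D n) U := by
  classical
  choose u huU huq using hU
  choose w hwU hwq using hUc
  have hfin : Finite (Vtx n) :=
    Finite.of_injective (fun v : Vtx n => (⟨v.1, Nat.lt_succ_of_le v.2.2⟩ : Fin (n+1)))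
      (by intro a b h; exact Subtype.ext (by simpa using congrArg Fin.val h))
  have heven : ∀ (i : Fin c) (v : Vtx n), q v.1 = 2 ^ K i → 2 ∣ v.1 := by
    intro i v hv
    have h1 : q v.1 ∣ v.1 := pow_padicValNat_dvd
    have h2 : (2:ℕ) ∣ q v.1 := by
      rw [hv]; exact dvd_pow_self 2 (by have := hgt i; omega)
    exact h2.trans h1
  set S := ((fun x => {y | y ∉ U ∧ (D n).Adj x y}) '' U) with hS
  have hSfin : S.Finite := Set.toFinite _
  have hmem : ∀ i, {y | y ∉ U ∧ (D n).Adj (u i) y} ∈ S := fun i => ⟨u i, huU i, rfl⟩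
  have hwi : ∀ i, w i ∈ {y | y ∉ U ∧ (D n).Adj (u i) y} := by
    intro i
    refine ⟨hwU i, ?_, Or.inr (Or.inr ?_)⟩
    · intro h
      exact hwU i (Subtype.ext h ▸ huU i)
    · rw [huq i, hwq i]
  have hg : Function.Injective
      (fun i : Fin c => ({y | y ∉ U ∧ (D n).Adj (u i) y} : Set (Vtx n))) := by
    intro i j h
    by_contra hne
    have hw : w i ∈ {y | y ∉ U ∧ (D n).Adj (u j) y} := by
      have h' : ({y | y ∉ U ∧ (D n).Adj (u i) y} : Set (Vtx n)) = {y | y ∉ U ∧ (D n).Adj (u j) y} := h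
      rw [← h']; exact hwi i
    obtain ⟨-, hne', hadj⟩ := hw
    have hqne : q (u j).1 ≠ q (w i).1 := by
      rw [huq j, hwq i]
      intro hpow
      exact hne (hinj (Nat.pow_right_injective (le_refl 2) hpow)).symm
    have h2j : 2 ∣ (u j).1 := heven j _ (huq j)
    have h2i : 2 ∣ (w i).1 := heven i _ (hwq i)
    rcases hadj with h1 | h1 | h1
    · omega
    · omega
    · exact hqne h1
  have hG : Function.Injective
      (fun i : Fin c => (⟨_, hmem i⟩ : S)) := by
    intro i j h
    exact hg (congrArg Subtype.val h)
  have hcard : Nat.card (Fin c) ≤ Nat.card S :=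
    Nat.card_le_card_of_injective _ hG
  have : simClasses (D n) U = S.ncard := rfl
  rw [this, ← Nat.card_coe_set_eq]
  simpa using hcard
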